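/- arXiv:gr-qc/0403024 — 2 statements merged into one kernel-verified Lean document; each statement's English description precedes it below -/
import Mathlib

section
/- Let T_{abcd} be a completely symmetric trace-free rank-4 tensor on 4-dimensional Minkowski space satisfying identity (Rai). Then for every null vector ℓ, the covector v with components v_d = T_{abcd} ℓ^a ℓ^b ℓ^c is null, i.e. v_d v^d = 0. -/
/-!
Contract (Rai) with `ℓ^a ℓ^b ℓ^c ℓ_e ℓ_f ℓ_g`. This product is symmetric in `(a,b,c)` and in
`(e,f,g)`, so the symmetrizations on the right-hand side drop out, and then every term carries a
metric factor `g_{ab}`, `g_a{}^e` or `g^{ef}` joined to two copies of `ℓ`, which vanishes because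
`ℓ` is null. On the left, by the complete symmetry of `T`, the contraction is `v_j v^j`.
-/

open Finset

noncomputable section

/-- Minkowski metric with lower indices, `diag(1,-1,-1,-1)`. -/
def gdn (a b : Fin 4) : ℝ := if a = b then (if a = 0 then 1 else -1) else 0

/-- Inverse Minkowski metric (upper indices); it is numerically equal to `gdn`. -/
def gup (a b : Fin 4) : ℝ := if a = b then (if a = 0 then 1 else -1) else 0

/-- The mixed metric `g_a{}^b`, i.e. the Kronecker delta. -/
def kd (a b : Fin 4) : ℝ := if a = b then 1 else 0

/-- Complete symmetry of a rank-4 tensor (invariance under all index permutations,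
generated by the adjacent transpositions). -/
def Sym4 (T : Fin 4 → Fin 4 → Fin 4 → Fin 4 → ℝ) : Prop :=
  ∀ a b c d, T a b c d = T b a c d ∧ T a b c d = T a c b d ∧ T a b c d = T a b d c

/-- Trace-freeness of a rank-4 tensor: every contraction of two of its indices vanishes. -/
def TraceFree4 (T : Fin 4 → Fin 4 → Fin 4 → Fin 4 → ℝ) : Prop :=
  (∀ c d, ∑ j, ∑ k, gup j k * T j k c d = 0) ∧
  (∀ c d, ∑ j, ∑ k, gup j k * T j c k d = 0) ∧
  (∀ c d, ∑ j, ∑ k, gup j k * T j c d k = 0) ∧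
  (∀ c d, ∑ j, ∑ k, gup j k * T c j k d = 0) ∧
  (∀ c d, ∑ j, ∑ k, gup j k * T c j d k = 0) ∧
  (∀ c d, ∑ j, ∑ k, gup j k * T c d j k = 0)

/-- The full contraction `T_{jklm} T^{jklm}`. -/
def TT (T : Fin 4 → Fin 4 → Fin 4 → Fin 4 → ℝ) : ℝ :=
  ∑ j, ∑ j1, ∑ k, ∑ k1, ∑ l, ∑ l1, ∑ m, ∑ m1,
    gup j j1 * gup k k1 * gup l l1 * gup m m1 * T j k l m * T j1 k1 l1 m1

/-- `T_{jabc} T^{jefg}` (free indices `e f g` up). -/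
def lhsR (T : Fin 4 → Fin 4 → Fin 4 → Fin 4 → ℝ) (a b c e f g : Fin 4) : ℝ :=
  ∑ j, ∑ j1, ∑ e1, ∑ f1, ∑ g1,
    gup j j1 * gup e e1 * gup f f1 * gup g g1 * T j a b c * T j1 e1 f1 g1

/-- `T_{bcjk} T^{fgjk}`. -/
def S2 (T : Fin 4 → Fin 4 → Fin 4 → Fin 4 → ℝ) (b c f g : Fin 4) : ℝ :=
  ∑ j, ∑ j1, ∑ k, ∑ k1, ∑ f1, ∑ g1,
    gup j j1 * gup k k1 * gup f f1 * gup g g1 * T b c j k * T f1 g1 j1 k1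

/-- `T_{jkb}{}^{f} T_{c}{}^{gjk}`. -/
def S2' (T : Fin 4 → Fin 4 → Fin 4 → Fin 4 → ℝ) (b f c g : Fin 4) : ℝ :=
  ∑ j, ∑ j1, ∑ k, ∑ k1, ∑ f1, ∑ g1,
    gup j j1 * gup k k1 * gup f f1 * gup g g1 * T j k b f1 * T c g1 j1 k1

/-- `T_{cjk}{}^{e} T^{fgjk}`. -/
def S3 (T : Fin 4 → Fin 4 → Fin 4 → Fin 4 → ℝ) (c e f g : Fin 4) : ℝ :=
  ∑ j, ∑ j1, ∑ k, ∑ k1, ∑ e1, ∑ f1, ∑ g1,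
    gup j j1 * gup k k1 * gup e e1 * gup f f1 * gup g g1 * T c j k e1 * T f1 g1 j1 k1

/-- `T_{jkab} T_{c}{}^{gjk}`. -/
def S4 (T : Fin 4 → Fin 4 → Fin 4 → Fin 4 → ℝ) (a b c g : Fin 4) : ℝ :=
  ∑ j, ∑ j1, ∑ k, ∑ k1, ∑ g1,
    gup j j1 * gup k k1 * gup g g1 * T j k a b * T c g1 j1 k1

/-- Symmetrization over three indices. -/
def sym3 (F : Fin 4 → Fin 4 → Fin 4 → ℝ) (a b c : Fin 4) : ℝ :=
  (F a b c + F a c b + F b a c + F b c a + F c a b + F c b a) / 6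

/-- Simultaneous symmetrization over the index groups `(a,b,c)` and `(e,f,g)`. -/
def sym33 (F : Fin 4 → Fin 4 → Fin 4 → Fin 4 → Fin 4 → Fin 4 → ℝ)
    (a b c e f g : Fin 4) : ℝ :=
  sym3 (fun x y z => sym3 (fun u v w => F x y z u v w) e f g) a b c

/-- Identity (Rai):
`T_{jabc}T^{jefg} = (3/2) g_(a^(e T_bc)jk T^fg)jk + (3/4) g_(a^(e T_|jk|b^f T_c)^g)jk
 - (3/4) g_(ab T_c)jk^(e T^fg)jk - (3/4) g^(ef T_jk(ab T_c)^g)jk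
 + (1/32)(3 g_(ab g_c)^(e g^fg) - 4 g_(a^(e g_b^f g_c)^g)) T_{jklm}T^{jklm}`,
with symmetrizations over the groups `(a,b,c)` and `(e,f,g)`. -/
def RaiId (T : Fin 4 → Fin 4 → Fin 4 → Fin 4 → ℝ) : Prop :=
  ∀ a b c e f g : Fin 4,
    lhsR T a b c e f g =
      (3/2) * sym33 (fun a b c e f g => kd a e * S2 T b c f g) a b c e f g
      + (3/4) * sym33 (fun a b c e f g => kd a e * S2' T b f c g) a b c e f g
      - (3/4) * sym33 (fun a b c e f g => gdn a b * S3 T c e f g) a b c e f g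
      - (3/4) * sym33 (fun a b c e f g => gup e f * S4 T a b c g) a b c e f g
      + (1/32) * (3 * sym33 (fun a b c e f g => gdn a b * kd c e * gup f g) a b c e f g
          - 4 * sym33 (fun a b c e f g => kd a e * kd b f * kd c g) a b c e f g) * TT T

section Contraction

variable {ι : Type*} [Fintype ι]

def contract3 (P : ι → ℝ) (F : ι → ι → ι → ℝ) : ℝ :=
  ∑ a, ∑ b, ∑ c, F a b c * (P a * P b * P c)

def contract6 (P Q : ι → ℝ) (M : ι → ι → ι → ι → ι → ι → ℝ) : ℝ :=
  contract3 P fun a b c => contract3 Q (M a b c)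

variable (P Q : ι → ℝ)

lemma contract3_add (F G : ι → ι → ι → ℝ) :
    contract3 P (fun a b c => F a b c + G a b c) = contract3 P F + contract3 P G := by
  simp only [contract3, add_mul, sum_add_distrib]

lemma contract3_sub (F G : ι → ι → ι → ℝ) :
    contract3 P (fun a b c => F a b c - G a b c) = contract3 P F - contract3 P G := by
  simp only [contract3, sub_mul, sum_sub_distrib]

lemma contract3_const_mul (r : ℝ) (F : ι → ι → ι → ℝ) :
    contract3 P (fun a b c => r * F a b c) = r * contract3 P F := by
  simp only [contract3, mul_sum, mul_assoc]

lemma contract3_mul_const (r : ℝ) (F : ι → ι → ι → ℝ) :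
    contract3 P (fun a b c => F a b c * r) = contract3 P F * r := by
  simp only [contract3, sum_mul, mul_right_comm _ r]

lemma contract3_sum {κ : Type*} [Fintype κ] (F : κ → ι → ι → ι → ℝ) :
    contract3 P (fun a b c => ∑ j, F j a b c) = ∑ j, contract3 P (F j) := by
  simp only [contract3, sum_mul]
  exact (sum_congr rfl fun a _ => (sum_congr rfl fun b _ => sum_comm).trans sum_comm).trans sum_comm

lemma contract3_swap12 (F : ι → ι → ι → ℝ) :
    contract3 P (fun a b c => F b a c) = contract3 P F := by
  rw [contract3, sum_comm]
  exact sum_congr rfl fun a _ => sum_congr rfl fun b _ => sum_congr rfl fun c _ => by ring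

lemma contract3_swap23 (F : ι → ι → ι → ℝ) :
    contract3 P (fun a b c => F a c b) = contract3 P F := by
  refine sum_congr rfl fun a _ => ?_
  rw [sum_comm]
  exact sum_congr rfl fun b _ => sum_congr rfl fun c _ => by ring

lemma contract3_mul_of_pair_left (Z : ι → ι → ℝ) (X : ι → ℝ) :
    contract3 P (fun a b c => Z a b * X c) =
      (∑ a, ∑ b, Z a b * (P a * P b)) * ∑ c, X c * P c := by
  rw [contract3, sum_mul]
  refine sum_congr rfl fun a _ => ?_
  rw [sum_mul]
  refine sum_congr rfl fun b _ => ?_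
  rw [mul_sum]
  exact sum_congr rfl fun c _ => by ring

lemma contract3_mul_of_pair_right (X : ι → ℝ) (Z : ι → ι → ℝ) :
    contract3 P (fun a b c => X a * Z b c) =
      (∑ a, X a * P a) * ∑ b, ∑ c, Z b c * (P b * P c) := by
  rw [contract3, sum_mul]
  refine sum_congr rfl fun a _ => ?_
  rw [mul_sum]
  refine sum_congr rfl fun b _ => ?_
  rw [mul_sum]
  exact sum_congr rfl fun c _ => by ring

lemma contract6_congr {M N : ι → ι → ι → ι → ι → ι → ℝ}
    (h : ∀ a b c e f g, M a b c e f g = N a b c e f g) : contract6 P Q M = contract6 P Q N := by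
  simp only [contract6, contract3, h]

lemma contract6_add (M N : ι → ι → ι → ι → ι → ι → ℝ) :
    contract6 P Q (fun a b c e f g => M a b c e f g + N a b c e f g) =
      contract6 P Q M + contract6 P Q N := by
  simp only [contract6, contract3_add]

lemma contract6_sub (M N : ι → ι → ι → ι → ι → ι → ℝ) :
    contract6 P Q (fun a b c e f g => M a b c e f g - N a b c e f g) =
      contract6 P Q M - contract6 P Q N := by
  simp only [contract6, contract3_sub]

lemma contract6_const_mul (r : ℝ) (M : ι → ι → ι → ι → ι → ι → ℝ) :
    contract6 P Q (fun a b c e f g => r * M a b c e f g) = r * contract6 P Q M := by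
  simp only [contract6, contract3_const_mul]

lemma contract6_mul_const (r : ℝ) (M : ι → ι → ι → ι → ι → ι → ℝ) :
    contract6 P Q (fun a b c e f g => M a b c e f g * r) = contract6 P Q M * r := by
  simp only [contract6, contract3_mul_const]

lemma contract6_eq_zero_of_pair_left (Z : ι → ι → ℝ) (R : ι → ι → ι → ι → ℝ)
    (hZ : ∑ a, ∑ b, Z a b * (P a * P b) = 0) :
    contract6 P Q (fun a b c e f g => Z a b * R c e f g) = 0 := by
  simp only [contract6, contract3_const_mul, contract3_mul_of_pair_left, hZ, zero_mul]

lemma contract6_eq_zero_of_pair_right (Z : ι → ι → ℝ) (R : ι → ι → ι → ι → ℝ)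
    (hZ : ∑ e, ∑ f, Z e f * (Q e * Q f) = 0) :
    contract6 P Q (fun a b c e f g => Z e f * R a b c g) = 0 := by
  simp only [contract6, contract3_mul_of_pair_left, hZ, zero_mul]
  simp only [contract3, zero_mul, sum_const_zero]

lemma contract6_eq_zero_of_pair_cross (Z : ι → ι → ℝ) (R : ι → ι → ι → ι → ℝ)
    (hZ : ∑ a, ∑ e, Z a e * (P a * Q e) = 0) :
    contract6 P Q (fun a b c e f g => Z a e * R b c f g) = 0 := by
  have hZ' : ∑ a, (∑ e, Z a e * Q e) * P a = 0 := by
    rw [← hZ]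
    simp only [sum_mul]
    exact sum_congr rfl fun a _ => sum_congr rfl fun e _ => by ring
  simp only [contract6, contract3_mul_of_pair_right, hZ', zero_mul]

end Contraction

section Symmetrization

variable (P Q : Fin 4 → ℝ)

lemma contract3_sym3 (F : Fin 4 → Fin 4 → Fin 4 → ℝ) : contract3 P (sym3 F) = contract3 P F := by
  have h12 := contract3_swap12 P
  have h23 := contract3_swap23 P
  have hsplit : contract3 P (sym3 F) = (contract3 P F + contract3 P (fun a b c => F a c b)
      + contract3 P (fun a b c => F b a c) + contract3 P (fun a b c => F b c a)
      + contract3 P (fun a b c => F c a b) + contract3 P (fun a b c => F c b a)) / 6 := by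
    simp only [contract3, sym3, add_div, add_mul, div_mul_eq_mul_div, sum_add_distrib, sum_div]
  rw [hsplit, h12 (fun a b c => F c a b), h23 (fun a b c => F b a c),
    h12 (fun a b c => F a c b), h23 F, h12 F]
  ring

lemma contract3_sym3_comm (N : Fin 4 → Fin 4 → Fin 4 → Fin 4 → Fin 4 → Fin 4 → ℝ)
    (a b c : Fin 4) :
    contract3 Q (fun e f g => sym3 (fun x y z => N x y z e f g) a b c) =
      sym3 (fun x y z => contract3 Q (N x y z)) a b c := by
  simp only [contract3, sym3, add_div, add_mul, div_mul_eq_mul_div, sum_add_distrib, sum_div]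

lemma contract6_sym33 (M : Fin 4 → Fin 4 → Fin 4 → Fin 4 → Fin 4 → Fin 4 → ℝ) :
    contract6 P Q (sym33 M) = contract6 P Q M := by
  change contract3 P (fun a b c => contract3 Q (fun e f g => sym33 M a b c e f g)) =
    contract3 P (fun a b c => contract3 Q (fun e f g => M a b c e f g))
  simp only [sym33, contract3_sym3_comm, contract3_sym3]

end Symmetrization

lemma Sym4.apply_rotate {T : Fin 4 → Fin 4 → Fin 4 → Fin 4 → ℝ} (hSym : Sym4 T) (a b c d : Fin 4) :
    T a b c d = T d a b c := by
  rw [(hSym a b c d).2.2, (hSym a b d c).2.1, (hSym a d b c).1]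

def metricSign (a : Fin 4) : ℝ := if a = 0 then 1 else -1

def lower (v : Fin 4 → ℝ) (a : Fin 4) : ℝ := ∑ b, gdn a b * v b

lemma metricSign_mul_self (a : Fin 4) : metricSign a * metricSign a = 1 := by
  unfold metricSign; split_ifs <;> norm_num

lemma sum_gup_mul (a : Fin 4) (v : Fin 4 → ℝ) : ∑ b, gup a b * v b = metricSign a * v a := by
  rw [sum_eq_single a (fun b _ hb => by simp [gup, Ne.symm hb]) (by simp)]
  simp [gup, metricSign]

-- `gdn` and `gup` have the same entries, so they unfold to the same term.
lemma lower_apply (v : Fin 4 → ℝ) (a : Fin 4) : lower v a = metricSign a * v a :=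
  sum_gup_mul a v

lemma lhsR_eq (T : Fin 4 → Fin 4 → Fin 4 → Fin 4 → ℝ) (a b c e f g : Fin 4) :
    lhsR T a b c e f g =
      ∑ j, metricSign j * T j a b c * (metricSign e * metricSign f * metricSign g * T j e f g) := by
  simp only [lhsR, mul_assoc, ← mul_sum, sum_gup_mul]
  exact sum_congr rfl fun j _ => by ring

lemma contract3_lower (v : Fin 4 → ℝ) (F : Fin 4 → Fin 4 → Fin 4 → ℝ) :
    contract3 (lower v) (fun e f g => metricSign e * metricSign f * metricSign g * F e f g) =
      contract3 v F := by
  refine sum_congr rfl fun e _ => sum_congr rfl fun f _ => sum_congr rfl fun g _ => ?_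
  simp only [lower_apply]
  linear_combination F e f g * v e * v f * v g *
    (metricSign_mul_self e * metricSign f * metricSign f * metricSign g * metricSign g
      + metricSign_mul_self f * metricSign g * metricSign g + metricSign_mul_self g)

lemma contract6_lhsR (T : Fin 4 → Fin 4 → Fin 4 → Fin 4 → ℝ) (v : Fin 4 → ℝ) :
    contract6 v (lower v) (lhsR T) = ∑ j, metricSign j * contract3 v (T j) ^ 2 := by
  rw [contract6_congr _ _ (lhsR_eq T)]
  simp only [contract6, contract3_sum, contract3_const_mul, contract3_lower, contract3_mul_const]
  exact sum_congr rfl fun j _ => by ring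

lemma RaiId.contract6_lhsR_eq_zero {T : Fin 4 → Fin 4 → Fin 4 → Fin 4 → ℝ} (hRai : RaiId T)
    {l : Fin 4 → ℝ} (hl : ∑ a, ∑ b, gdn a b * l a * l b = 0) :
    contract6 l (lower l) (lhsR T) = 0 := by
  have hdn : ∑ a, ∑ b, gdn a b * (l a * l b) = 0 := by simpa only [mul_assoc] using hl
  have hnull : ∑ a, l a * lower l a = 0 := by
    rw [← hl]
    simp only [lower, mul_sum]
    exact sum_congr rfl fun a _ => sum_congr rfl fun b _ => by ring
  have hmixed : ∑ a, ∑ e, kd a e * (l a * lower l e) = 0 := by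
    simpa only [kd, ite_mul, one_mul, zero_mul, sum_ite_eq, mem_univ, if_true] using hnull
  have hup : ∑ e, ∑ f, gup e f * (lower l e * lower l f) = 0 := by
    rw [← hnull]
    simp only [sum_gup_mul, lower_apply]
    exact sum_congr rfl fun a _ => by
      linear_combination metricSign a * l a ^ 2 * metricSign_mul_self a
  rw [contract6_congr _ _ hRai]
  simp only [contract6_add, contract6_sub, contract6_const_mul, contract6_mul_const,
    contract6_sym33]
  rw [contract6_eq_zero_of_pair_cross _ _ kd _ hmixed,
    contract6_eq_zero_of_pair_cross _ _ kd (fun b c f g => S2' T b f c g) hmixed,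
    contract6_eq_zero_of_pair_left _ _ gdn _ hdn,
    contract6_eq_zero_of_pair_right _ _ gup _ hup,
    contract6_congr _ _ (fun a b c e f g => mul_assoc (gdn a b) (kd c e) (gup f g)),
    contract6_eq_zero_of_pair_left _ _ gdn _ hdn,
    contract6_congr _ _ (fun a b c e f g => mul_assoc (kd a e) (kd b f) (kd c g)),
    contract6_eq_zero_of_pair_cross _ _ kd _ hmixed]
  ring

theorem stmt_8_general (T : Fin 4 → Fin 4 → Fin 4 → Fin 4 → ℝ)
    (hSym : Sym4 T) (hRai : RaiId T) :
    ∀ l : Fin 4 → ℝ,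
      (∑ a, ∑ b, gdn a b * l a * l b) = 0 →
      (∑ d, ∑ d1, gup d d1 *
        (∑ a, ∑ b, ∑ c, T a b c d * l a * l b * l c) *
        (∑ a, ∑ b, ∑ c, T a b c d1 * l a * l b * l c)) = 0 := by
  intro l hl
  have hv : ∀ d, ∑ a, ∑ b, ∑ c, T a b c d * l a * l b * l c = contract3 l (T d) := fun d => by
    simp only [contract3, hSym.apply_rotate _ _ _ d, mul_assoc]
  calc _ = ∑ d, metricSign d * contract3 l (T d) ^ 2 := by
        simp only [hv]
        simp only [mul_assoc, sum_gup_mul, sq]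
    _ = contract6 l (lower l) (lhsR T) := (contract6_lhsR T l).symm
    _ = 0 := hRai.contract6_lhsR_eq_zero hl

/-- If `T` satisfies (Rai) then `T_{abcd} ℓ^a ℓ^b ℓ^c` is null whenever `ℓ` is null. -/
theorem stmt_8 (T : Fin 4 → Fin 4 → Fin 4 → Fin 4 → ℝ)
    (hSym : Sym4 T) (hTF : TraceFree4 T) (hRai : RaiId T) :
    ∀ l : Fin 4 → ℝ,
      (∑ a, ∑ b, gdn a b * l a * l b) = 0 →
      (∑ d, ∑ d1, gup d d1 *
        (∑ a, ∑ b, ∑ c, T a b c d * l a * l b * l c) *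
        (∑ a, ∑ b, ∑ c, T a b c d1 * l a * l b * l c)) = 0 :=
  stmt_8_general T hSym hRai
end
end

section
/- Let n ≥ 1 and let T be a Hermitian spinor tensor with n unprimed and n primed indices (i.e. T : ({0,1}^n) × ({0,1}^n) → ℂ with conj(T(A,A')) = T(A',A)). Then T satisfies T_{A...B}{}^{A'...B'} T_{C...D}{}^{C'...D'} = T_{A...B}{}^{C'...D'} T_{C...D}{}^{A'...B'} for all index values if and only if there exist a complex-valued spinor χ with n unprimed indices and a sign s ∈ {1,-1} such that s T_{A...B}{}^{A'...B'} = χ_{A...B} · conj(χ_{A'...B'}); moreover, if T is completely symmetric in its unprimed indices and in its primed indices, then χ can be chosen completely symmetric. -/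
open Finset

noncomputable section

/-- The spinor ε-symbol, `ε_{01} = 1` (the same numerical values are used for
`ε^{AB}`, `ε̄_{A'B'}` and `ε̄^{A'B'}`). -/
def eps (A B : Fin 2) : ℂ :=
  if A = 0 ∧ B = 1 then 1 else if A = 1 ∧ B = 0 then -1 else 0

/-- Symmetrization over a pair of spinor indices. -/
def s2c {ι : Type*} (F : ι → ι → ℂ) (x y : ι) : ℂ := (F x y + F y x) / 2


/-- `T_{A...B}{}^{A'...B'}`: the spinor tensor with all primed indices raised. -/
def TupN (n : ℕ) (T : (Fin n → Fin 2) → (Fin n → Fin 2) → ℂ)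
    (A A' : Fin n → Fin 2) : ℂ :=
  ∑ P : Fin n → Fin 2, (∏ i, eps (A' i) (P i)) * T A P

/-- `conj(χ)^{A'...B'}`: the complex conjugate spinor with all its primed indices raised. -/
def conjUpN (n : ℕ) (χ : (Fin n → Fin 2) → ℂ) (A' : Fin n → Fin 2) : ℂ :=
  ∑ P : Fin n → Fin 2, (∏ i, eps (A' i) (P i)) * (starRingEnd ℂ) (χ P)

/-!
Raising the primed indices is right multiplication by the `n`-th Kronecker power of `ε`, which
squares to `(-1)ⁿ`; so the quadratic identity says exactly that `T` itself, viewed as a matrix,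
has vanishing `2 × 2` minors. A Hermitian matrix of rank at most one is `±χ χ*`, and since `χ` is
then determined by any nonzero row, it inherits every symmetry of the rows of `T`.
-/

open ComplexConjugate
open scoped Matrix

def TwoMinorsVanish {I J R : Type*} [CommSemiring R] (U : Matrix I J R) : Prop :=
  ∀ a c b d, U a b * U c d = U a d * U c b

namespace TwoMinorsVanish

variable {I J K R : Type*} [CommSemiring R] [Fintype J] {U : Matrix I J R}

theorem mul_right (hU : TwoMinorsVanish U) (M : Matrix J K R) : TwoMinorsVanish (U * M) := by
  intro a c b d
  simp only [Matrix.mul_apply, Finset.sum_mul_sum]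
  rw [Finset.sum_comm]
  refine Finset.sum_congr rfl fun x _ => Finset.sum_congr rfl fun y _ => ?_
  calc U a y * M y b * (U c x * M x d) = M y b * M x d * (U a y * U c x) := by ring
    _ = M y b * M x d * (U a x * U c y) := by rw [hU a c y x]
    _ = U a x * M x d * (U c y * M y b) := by ring

theorem of_mul_right [Fintype K] [DecidableEq J] {M : Matrix J K R} {M' : Matrix K J R}
    (h : TwoMinorsVanish (U * M)) (hM : M * M' = 1) : TwoMinorsVanish U := by
  simpa only [Matrix.mul_assoc, hM, Matrix.mul_one] using h.mul_right M'

end TwoMinorsVanish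

theorem TwoMinorsVanish.of_mul_eq_mul {I J R : Type*} [CommRing R] [NoZeroDivisors R]
    {U : Matrix I J R} {c : R} (hc : c ≠ 0) (v : I → R) (w : J → R)
    (h : ∀ a b, c * U a b = v a * w b) : TwoMinorsVanish U := by
  intro a c' b d
  have key : c * c * (U a b * U c' d) = c * c * (U a d * U c' b) := by
    linear_combination c * U c' d * h a b + v a * w b * h c' d
      - c * U c' b * h a d - v a * w d * h c' b
  exact mul_left_cancel₀ (mul_ne_zero hc hc) key

namespace Matrix

variable {ι κ ν R : Type*} [CommSemiring R]

def kroneckerPow (M : Matrix ι κ R) (n : ℕ) : Matrix (Fin n → ι) (Fin n → κ) R :=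
  of fun A B => ∏ i, M (A i) (B i)

theorem kroneckerPow_mul [Fintype κ] (M : Matrix ι κ R) (N : Matrix κ ν R) (n : ℕ) :
    kroneckerPow M n * kroneckerPow N n = kroneckerPow (M * N) n := by
  ext A B
  simp only [kroneckerPow, mul_apply, of_apply, ← Finset.prod_mul_distrib]
  exact (Fintype.prod_sum fun i j => M (A i) j * N j (B i)).symm

theorem kroneckerPow_smul_one [DecidableEq ι] (c : R) (n : ℕ) :
    kroneckerPow (c • 1 : Matrix ι ι R) n = c ^ n • 1 := by
  ext A B
  simp [kroneckerPow, one_apply, Fintype.prod_ite_zero, funext_iff]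

end Matrix

section Hermitian

variable {I : Type*} {T : Matrix I I ℂ}

theorem Matrix.IsHermitian.exists_apply_self_ne_zero (hT : T.IsHermitian)
    (hrank : TwoMinorsVanish T) (h0 : T ≠ 0) : ∃ a, T a a ≠ 0 := by
  obtain ⟨a, b, hab⟩ : ∃ a b, T a b ≠ 0 := by
    by_contra! h
    exact h0 (Matrix.ext h)
  refine ⟨a, left_ne_zero_of_mul (a := T a a) (b := T b b) ?_⟩
  rw [hrank a b a b, ← hT.apply b a]
  exact mul_ne_zero hab (star_ne_zero.mpr hab)

/-- `χ` is the column of `T` through a nonzero diagonal entry `T a a`, divided by `√|T a a|`,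
and `s` is the sign of `T a a`. -/
theorem Matrix.IsHermitian.exists_sign_mul_eq_mul_conj (hT : T.IsHermitian)
    (hrank : TwoMinorsVanish T) :
    ∃ s : ℝ, (s = 1 ∨ s = -1) ∧ ∃ χ : I → ℂ, ∀ A B, (s : ℂ) * T A B = χ A * conj (χ B) := by
  by_cases h0 : T = 0
  · exact ⟨1, Or.inl rfl, 0, fun A B => by simp [h0]⟩
  obtain ⟨a, ha⟩ := hT.exists_apply_self_ne_zero hrank h0
  set m := (T a a).re
  have hTaa : T a a = m := (hT.coe_re_apply_self a).symm
  have hm_ne : m ≠ 0 := fun h => ha (by rw [hTaa, h, Complex.ofReal_zero])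
  refine ⟨m / |m|, ?_, fun A => T A a / √|m|, fun A B => ?_⟩
  · rcases abs_choice m with h | h <;> rw [h] <;> simp [hm_ne]
  have hr : ((√|m| : ℝ) : ℂ) ^ 2 = (|m| : ℝ) := by
    rw [← Complex.ofReal_pow, Real.sq_sqrt (abs_nonneg m)]
  have habs : ((|m| : ℝ) : ℂ) ≠ 0 := by exact_mod_cast abs_ne_zero.mpr hm_ne
  rw [map_div₀, Complex.conj_ofReal, starRingEnd_apply, hT.apply, div_mul_div_comm, ← sq, hr,
    hrank A a a B, hTaa, eq_div_iff habs]
  push_cast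
  field_simp

theorem eq_of_mul_eq_mul_conj_of_row_eq {χ : I → ℂ} {c : ℂ}
    (hχ : ∀ A B, c * T A B = χ A * conj (χ B)) {A A' : I} (hrow : ∀ B, T A B = T A' B) :
    χ A = χ A' := by
  by_cases h : ∃ B, χ B ≠ 0
  · obtain ⟨B, hB⟩ := h
    refine mul_right_cancel₀ ((map_ne_zero conj).mpr hB) ?_
    rw [← hχ, ← hχ, hrow]
  · push Not at h
    rw [h, h]

end Hermitian

def raiseMatrix (n : ℕ) : Matrix (Fin n → Fin 2) (Fin n → Fin 2) ℂ :=
  (Matrix.of eps)ᵀ.kroneckerPow n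

theorem raiseMatrix_mul_self (n : ℕ) : raiseMatrix n * raiseMatrix n = (-1 : ℂ) ^ n • 1 := by
  have eps_sq : (Matrix.of eps)ᵀ * (Matrix.of eps)ᵀ = (-1 : ℂ) • 1 := by
    ext a b
    fin_cases a <;> fin_cases b <;> simp [eps, Matrix.mul_apply]
  rw [raiseMatrix, Matrix.kroneckerPow_mul, eps_sq, Matrix.kroneckerPow_smul_one]

theorem TupN_eq_mul (n : ℕ) (T : (Fin n → Fin 2) → (Fin n → Fin 2) → ℂ) :
    TupN n T = Matrix.of T * raiseMatrix n := by
  ext A A'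
  simp only [TupN, Matrix.mul_apply, raiseMatrix, Matrix.kroneckerPow, Matrix.transpose_apply,
    Matrix.of_apply, mul_comm]

theorem twoMinorsVanish_of_TupN {n : ℕ} {T : (Fin n → Fin 2) → (Fin n → Fin 2) → ℂ}
    (h : TwoMinorsVanish (TupN n T)) : TwoMinorsVanish (Matrix.of T) := by
  rw [TupN_eq_mul] at h
  refine h.of_mul_right (M' := (-1 : ℂ) ^ n • raiseMatrix n) ?_
  rw [Matrix.mul_smul, raiseMatrix_mul_self, smul_smul, ← pow_add, Even.neg_one_pow ⟨n, rfl⟩,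
    one_smul]

theorem mul_TupN_eq_mul_conjUpN {n : ℕ} {T : (Fin n → Fin 2) → (Fin n → Fin 2) → ℂ}
    {χ : (Fin n → Fin 2) → ℂ} {c : ℂ} (h : ∀ A B, c * T A B = χ A * conj (χ B)) (A A') :
    c * TupN n T A A' = χ A * conjUpN n χ A' := by
  simp only [TupN, conjUpN, Finset.mul_sum, mul_left_comm c, h, mul_left_comm (χ A)]

theorem stmt_9_general (n : ℕ)
    (T : (Fin n → Fin 2) → (Fin n → Fin 2) → ℂ)
    (hHerm : ∀ A A', (starRingEnd ℂ) (T A A') = T A' A) :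
    ((∀ A C A' C', TupN n T A A' * TupN n T C C' = TupN n T A C' * TupN n T C A') ↔
      ∃ s : ℝ, (s = 1 ∨ s = -1) ∧ ∃ χ : (Fin n → Fin 2) → ℂ,
        ∀ A A', (s : ℂ) * TupN n T A A' = χ A * conjUpN n χ A')
    ∧
    (((∀ (A A' : Fin n → Fin 2) (σ : Equiv.Perm (Fin n)), T (A ∘ σ) A' = T A A') ∧
      (∀ (A A' : Fin n → Fin 2) (σ : Equiv.Perm (Fin n)), T A (A' ∘ σ) = T A A')) →
      ((∀ A C A' C', TupN n T A A' * TupN n T C C' = TupN n T A C' * TupN n T C A') ↔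
        ∃ s : ℝ, (s = 1 ∨ s = -1) ∧ ∃ χ : (Fin n → Fin 2) → ℂ,
          (∀ (A : Fin n → Fin 2) (σ : Equiv.Perm (Fin n)), χ (A ∘ σ) = χ A) ∧
          ∀ A A', (s : ℂ) * TupN n T A A' = χ A * conjUpN n χ A')) := by
  have hT : (Matrix.of T).IsHermitian := Matrix.IsHermitian.ext fun A B => hHerm B A
  have exists_factor (h : TwoMinorsVanish (TupN n T)) :
      ∃ s : ℝ, (s = 1 ∨ s = -1) ∧ ∃ χ : (Fin n → Fin 2) → ℂ,
        ∀ A B, (s : ℂ) * T A B = χ A * conj (χ B) :=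
    hT.exists_sign_mul_eq_mul_conj (twoMinorsVanish_of_TupN h)
  have minors_of_factor : (∃ s : ℝ, (s = 1 ∨ s = -1) ∧ ∃ χ : (Fin n → Fin 2) → ℂ,
      ∀ A A', (s : ℂ) * TupN n T A A' = χ A * conjUpN n χ A') → TwoMinorsVanish (TupN n T) := by
    rintro ⟨s, hs, χ, hχ⟩
    exact TwoMinorsVanish.of_mul_eq_mul (by rcases hs with rfl | rfl <;> norm_num) χ _ hχ
  constructor
  · refine ⟨fun h => ?_, minors_of_factor⟩
    obtain ⟨s, hs, χ, hχ⟩ := exists_factor h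
    exact ⟨s, hs, χ, mul_TupN_eq_mul_conjUpN hχ⟩
  · rintro ⟨hsym, -⟩
    refine ⟨fun h => ?_, fun ⟨s, hs, χ, _, hχ⟩ => minors_of_factor ⟨s, hs, χ, hχ⟩⟩
    obtain ⟨s, hs, χ, hχ⟩ := exists_factor h
    exact ⟨s, hs, χ, fun A σ => eq_of_mul_eq_mul_conj_of_row_eq hχ fun B => hsym A B σ,
      mul_TupN_eq_mul_conjUpN hχ⟩

/-- A Hermitian spinor tensor with `n` unprimed and `n` primed indices satisfies
`T_{A..B}{}^{A'..B'} T_{C..D}{}^{C'..D'} = T_{A..B}{}^{C'..D'} T_{C..D}{}^{A'..B'}` iff,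
up to sign, it factorizes as `χ_{A..B} conj(χ)_{A'..B'}`; moreover, when `T` is
completely symmetric in each index group, `χ` can be chosen completely symmetric. -/
theorem stmt_9 (n : ℕ) (hn : 1 ≤ n)
    (T : (Fin n → Fin 2) → (Fin n → Fin 2) → ℂ)
    (hHerm : ∀ A A', (starRingEnd ℂ) (T A A') = T A' A) :
    ((∀ A C A' C', TupN n T A A' * TupN n T C C' = TupN n T A C' * TupN n T C A') ↔
      ∃ s : ℝ, (s = 1 ∨ s = -1) ∧ ∃ χ : (Fin n → Fin 2) → ℂ,
        ∀ A A', (s : ℂ) * TupN n T A A' = χ A * conjUpN n χ A')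
    ∧
    (((∀ (A A' : Fin n → Fin 2) (σ : Equiv.Perm (Fin n)), T (A ∘ σ) A' = T A A') ∧
      (∀ (A A' : Fin n → Fin 2) (σ : Equiv.Perm (Fin n)), T A (A' ∘ σ) = T A A')) →
      ((∀ A C A' C', TupN n T A A' * TupN n T C C' = TupN n T A C' * TupN n T C A') ↔
        ∃ s : ℝ, (s = 1 ∨ s = -1) ∧ ∃ χ : (Fin n → Fin 2) → ℂ,
          (∀ (A : Fin n → Fin 2) (σ : Equiv.Perm (Fin n)), χ (A ∘ σ) = χ A) ∧
          ∀ A A', (s : ℂ) * TupN n T A A' = χ A * conjUpN n χ A')) :=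
  stmt_9_general n T hHerm
end
end
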